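/- arXiv:1509.05905 — 5 statements merged into one kernel-verified Lean document; each statement's English description precedes it below -/
import Mathlib

section
/- Let U ⊆ ℝ^n be a nonempty connected open set and let f : U → ℝ be a function that is regular on axis-parallel intervals. Then there exist real polynomials p, q in n variables, with q not the zero polynomial, such that f(x) = p(x)/q(x) for every x ∈ U with q(x) ≠ 0 (so f agrees with the rational function p/q on the dense open subset {x ∈ U : q(x) ≠ 0} of U). (Corollary 7.2, stated without the codimension-two claim on the polar set.) -/
open MvPolynomial

/-- `f` is regular on axis-parallel open intervals contained in `U`: on every open
interval `I ⊆ ℝ` whose image under `t ↦ x + t • eᵢ` lies in `U`, and at every `t₀ ∈ I`,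
the function `t ↦ f (x + t • eᵢ)` is represented on `I` by a quotient of one-variable
polynomials whose denominator does not vanish at `t₀`. -/
def RegularOnAxisParallelIntervals (n : ℕ) (U : Set (Fin n → ℝ))
    (f : (Fin n → ℝ) → ℝ) : Prop :=
  ∀ (i : Fin n) (x : Fin n → ℝ) (I : Set ℝ), IsOpen I → I.OrdConnected →
    (∀ t ∈ I, x + t • (Pi.single i 1 : Fin n → ℝ) ∈ U) →
    ∀ t₀ ∈ I, ∃ p q : Polynomial ℝ, q.eval t₀ ≠ 0 ∧
      ∀ t ∈ I, q.eval t ≠ 0 →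
        f (x + t • (Pi.single i 1 : Fin n → ℝ)) = p.eval t / q.eval t

open scoped Polynomial Topology

/-!
Induction on `n`, writing points of `ℝⁿ⁺¹` as `(s, y)`. On a small cube, the induction hypothesis
gives `f (s, ·) = Pₛ / Qₛ` on every slice, and regularity gives `f (·, y) = a_y / b_y` on every
vertical segment. By Baire's theorem, for some `d` the `y` with `deg a_y, deg b_y ≤ d` are Zariski
dense. Interpolating the slice representations at `4d + 1` heights yields `α, β ∈ ℝ[y][s]` of
degree `≤ 2d` with `α / β = a_y / b_y` for generic `y`, hence `α(s) / β(s) = Pₛ / Qₛ` for all but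
finitely many `s`. A function regular on axis-parallel intervals which equals `A / B` at infinitely
many points of a segment equals it wherever `B ≠ 0` on the segment; applied coordinate by
coordinate, this spreads the representation from these slices to the cube, and by connectedness
to `U`.
-/

namespace Polynomial

theorem eq_eval_div_of_infinite {K : Type*} [Field K] {g : K → K} {I T : Set K}
    {p q a b : K[X]} (hpq : ∀ s ∈ I, q.eval s ≠ 0 → g s = p.eval s / q.eval s)
    (hab : ∀ s ∈ T, b.eval s ≠ 0 → g s = a.eval s / b.eval s) (hTI : T ⊆ I)
    (hT : T.Infinite) {s₀ : K} (hs₀ : s₀ ∈ I) (hq : q.eval s₀ ≠ 0) (hb : b.eval s₀ ≠ 0) :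
    g s₀ = a.eval s₀ / b.eval s₀ := by
  have hq0 : q ≠ 0 := by rintro rfl; simp at hq
  have hb0 : b ≠ 0 := by rintro rfl; simp at hb
  have hcross : p * b = a * q := by
    rw [← sub_eq_zero]
    refine eq_zero_of_infinite_isRoot _
      (((hT.sdiff (finite_setOfPred_isRoot hq0)).sdiff (finite_setOfPred_isRoot hb0)).mono ?_)
    rintro s ⟨⟨hsT, hqs : q.eval s ≠ 0⟩, hbs : b.eval s ≠ 0⟩
    have h := (hpq s (hTI hsT) hqs).symm.trans (hab s hsT hbs)
    rw [div_eq_div_iff hqs hbs] at h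
    simp [IsRoot, h, mul_comm]
  have h₀ := congrArg (eval s₀) hcross
  simp only [eval_mul] at h₀
  rw [hpq s₀ hs₀ hq, div_eq_div_iff hq hb, h₀, mul_comm]

theorem mul_eq_mul_of_eval_eq_mul {R : Type*} [CommRing R] [IsDomain R] {g : R → R}
    {α β a b : R[X]} {d e : ℕ} (hα : α.natDegree ≤ e) (hβ : β.natDegree ≤ e)
    (ha : a.natDegree ≤ d) (hb : b.natDegree ≤ d) (hb0 : b ≠ 0) (S : Finset R)
    (hS : e + 2 * d < S.card) (hαβ : ∀ s ∈ S, α.eval s = g s * β.eval s)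
    (hab : ∀ s ∈ S, b.eval s ≠ 0 → a.eval s = g s * b.eval s) :
    α * b = a * β := by
  rw [← sub_eq_zero]
  -- multiplying by `b` makes the difference vanish also at the roots of `b`
  refine (mul_eq_zero.mp (eq_zero_of_natDegree_lt_card_of_eval_eq_zero' _ S
    (fun s hs => ?_) ?_)).resolve_right hb0
  · by_cases hbs : b.eval s = 0
    · simp [hbs]
    · simp only [eval_mul, eval_sub, hαβ s hs, hab s hs hbs]; ring
  · refine (natDegree_mul_le.trans (add_le_add (natDegree_sub_le _ _) le_rfl)).trans_lt ?_
    refine lt_of_le_of_lt ?_ hS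
    have := natDegree_mul_le (p := α) (q := b)
    have := natDegree_mul_le (p := a) (q := β)
    omega

theorem exists_eval_mul_eq_mul_eval {R : Type*} [CommRing R] [IsDomain R] {ι : Type*}
    [Fintype ι] {e : ℕ} (hle : Fintype.card ι ≤ 2 * e + 1) (hlt : e < Fintype.card ι) {t : ι → R}
    (ht : Function.Injective t) (p q : ι → R) (hq : ∀ i, q i ≠ 0) :
    ∃ α β : R[X], α.natDegree ≤ e ∧ β.natDegree ≤ e ∧ β ≠ 0 ∧
      ∀ i, α.eval (t i) * q i = p i * β.eval (t i) := by
  classical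
  let L : (Fin (e + 1) → R) × (Fin (e + 1) → R) →ₗ[R] ι → R :=
    LinearMap.pi fun i => q i • (leval (t i) ∘ₗ ofFn (e + 1) ∘ₗ LinearMap.fst R _ _) -
      p i • (leval (t i) ∘ₗ ofFn (e + 1) ∘ₗ LinearMap.snd R _ _)
  -- `2e + 2` unknown coefficients, at most `2e + 1` linear equations
  obtain ⟨⟨u, w⟩, hker, hne⟩ : ∃ v, L v = 0 ∧ v ≠ 0 := by
    by_contra! h
    have := LinearMap.finrank_le_finrank_of_injective (f := L)
      ((injective_iff_map_eq_zero L).mpr h)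
    simp only [Module.finrank_prod, Module.finrank_fintype_fun_eq_card, Fintype.card_fin] at this
    omega
  have heq : ∀ i, (ofFn (e + 1) u).eval (t i) * q i = p i * (ofFn (e + 1) w).eval (t i) := by
    intro i
    have := congrFun hker i
    simp only [L, LinearMap.pi_apply, LinearMap.sub_apply, LinearMap.smul_apply,
      LinearMap.coe_comp, LinearMap.coe_fst, LinearMap.coe_snd, Function.comp_apply, leval_apply,
      smul_eq_mul, Pi.zero_apply] at this
    linear_combination this
  have hdeg : ∀ v : Fin (e + 1) → R, (ofFn (e + 1) v).natDegree ≤ e := fun v =>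
    Nat.lt_succ_iff.mp (ofFn_natDegree_lt (Nat.succ_pos e) v)
  refine ⟨ofFn (e + 1) u, ofFn (e + 1) w, hdeg u, hdeg w, fun hw => hne ?_, heq⟩
  have hw0 : w = 0 := injective_ofFn (e + 1) (by simpa using hw)
  have hu0 : ofFn (e + 1) u = 0 := by
    refine eq_zero_of_natDegree_lt_card_of_eval_eq_zero _ ht (fun i => ?_) ((hdeg u).trans_lt hlt)
    simpa [hw, hq i] using heq i
  rw [hw0, injective_ofFn (e + 1) (hu0.trans (ofFn_zero _).symm)]
  rfl

end Polynomial

namespace MvPolynomial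

theorem eq_zero_of_eval_eq_zero_of_isOpen {σ : Type*} [Fintype σ]
    {V : Set (σ → ℝ)} (hV : IsOpen V) (hne : V.Nonempty) {g : MvPolynomial σ ℝ}
    (h : ∀ x ∈ V, eval x g = 0) : g = 0 := by
  obtain ⟨x, hx⟩ := hne
  obtain ⟨r, hr, hball⟩ := Metric.isOpen_iff.mp hV x hx
  rw [ball_pi x hr] at hball
  refine funext_set (fun i => Metric.ball (x i) r) (fun i => ?_) fun y hy => ?_
  · simpa [Real.ball_eq_Ioo] using Set.Ioo_infinite (by linarith : x i - r < x i + r)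
  · simpa using h y (hball hy)

theorem exists_forall_exists_eval_ne_zero_of_subset_iUnion {σ ι : Type*}
    [Fintype σ] [Countable ι] {V : Set (σ → ℝ)} (hV : IsOpen V) (hne : V.Nonempty)
    {W : ι → Set (σ → ℝ)} (hW : V ⊆ ⋃ i, W i) :
    ∃ i, ∀ g : MvPolynomial σ ℝ, g ≠ 0 → ∃ y ∈ V ∩ W i, eval y g ≠ 0 := by
  by_contra! h
  choose g hg0 hgW using h
  have hopen : ∀ i, IsOpen {y | eval y (g i) ≠ 0} := fun i =>
    isOpen_ne_fun (continuous_eval _) continuous_const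
  have hdense : ∀ i, Dense {y | eval y (g i) ≠ 0} := fun i => by
    refine dense_iff_inter_open.mpr fun O hO hOne => by_contra fun hempty => hg0 i ?_
    refine eq_zero_of_eval_eq_zero_of_isOpen hO hOne fun y hy => by_contra fun hy0 => ?_
    exact hempty ⟨y, hy, hy0⟩
  obtain ⟨y, hyV, hy⟩ := (dense_iInter_of_isOpen hopen hdense).inter_open_nonempty V hV hne
  obtain ⟨i, hi⟩ := Set.mem_iUnion.mp (hW hyV)
  exact Set.mem_iInter.mp hy i (hgW i y ⟨hyV, hi⟩)

theorem eval_polynomial_eval_C {σ R : Type*} [CommSemiring R] (α : (MvPolynomial σ R)[X])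
    (y : σ → R) (s : R) : eval y (α.eval (C s)) = (α.map (eval y)).eval s := by
  rw [Polynomial.eval_map, ← Polynomial.eval₂_at_apply, eval_C]

theorem eval_eval_C_finSuccEquiv {R : Type*} [CommSemiring R] {n : ℕ}
    (P : MvPolynomial (Fin (n + 1)) R) (s : R) (y : Fin n → R) :
    eval y ((finSuccEquiv R n P).eval (C s)) = eval (Fin.cons s y) P := by
  rw [eval_polynomial_eval_finSuccEquiv, eval_C]
  rfl

theorem eval_cons_finSuccEquiv_symm {R : Type*} [CommSemiring R] {n : ℕ}
    (α : (MvPolynomial (Fin n) R)[X]) (s : R) (y : Fin n → R) :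
    eval (Fin.cons s y) ((finSuccEquiv R n).symm α) = eval y (α.eval (C s)) := by
  rw [← eval_eval_C_finSuccEquiv, AlgEquiv.apply_symm_apply]

theorem finite_setOf_eval_C_finSuccEquiv_eq_zero {R : Type*} [CommRing R] [IsDomain R]
    {n : ℕ} {D : MvPolynomial (Fin (n + 1)) R} (hD : D ≠ 0) :
    {s : R | (finSuccEquiv R n D).eval (C s) = 0}.Finite :=
  (Polynomial.finite_setOfPred_isRoot (by simpa using hD)).preimage (C_injective _ _).injOn

end MvPolynomial

theorem ball_eq_univ_pi_Ioo {ι : Type*} [Fintype ι] (x : ι → ℝ) {r : ℝ} (hr : 0 < r) :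
    Metric.ball x r = Set.univ.pi fun k => Set.Ioo (x k - r) (x k + r) := by
  simp [ball_pi x hr, Real.ball_eq_Ioo]

theorem Fin.cons_mem_univ_pi {α : Type*} {N : ℕ} {J : Fin (N + 1) → Set α} {s : α}
    {z : Fin N → α} :
    Fin.cons s z ∈ Set.univ.pi J ↔ s ∈ J 0 ∧ z ∈ Set.univ.pi (Fin.tail J) := by
  simp [Fin.forall_fin_succ, Fin.tail]

def EqOnDiv {σ : Type*} (f : (σ → ℝ) → ℝ) (A B : MvPolynomial σ ℝ) (S : Set (σ → ℝ)) : Prop :=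
  ∀ x ∈ S, eval x B ≠ 0 → f x = eval x A / eval x B

theorem EqOnDiv.of_mul_eq_mul {σ : Type*} {g : (σ → ℝ) → ℝ} {P Q A B : MvPolynomial σ ℝ}
    {S : Set (σ → ℝ)} (h : EqOnDiv g P Q S) (hAB : A * Q = P * B) :
    EqOnDiv g A B (S ∩ {y | eval y Q ≠ 0}) := by
  rintro y ⟨hy, hQ : eval y Q ≠ 0⟩ hB
  rw [h y hy hQ, div_eq_div_iff hQ hB]
  simpa [mul_comm] using (congrArg (eval y) hAB).symm

namespace RegularOnAxisParallelIntervals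

variable {N : ℕ}

theorem mono {n : ℕ} {U V : Set (Fin n → ℝ)} {f : (Fin n → ℝ) → ℝ}
    (h : RegularOnAxisParallelIntervals n U f) (hVU : V ⊆ U) :
    RegularOnAxisParallelIntervals n V f :=
  fun i x I hIo hIc hIV => h i x I hIo hIc fun t ht => hVU (hIV t ht)

theorem comp_cons {U : Set (Fin (N + 1) → ℝ)} {f : (Fin (N + 1) → ℝ) → ℝ}
    (h : RegularOnAxisParallelIntervals (N + 1) U f) (s : ℝ) :
    RegularOnAxisParallelIntervals N {y | Fin.cons s y ∈ U} (fun y => f (Fin.cons s y)) := by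
  have hcons : ∀ (i : Fin N) (y : Fin N → ℝ) (t : ℝ),
      Fin.cons s (y + t • Pi.single i 1 : Fin N → ℝ) =
        (Fin.cons s y : Fin (N + 1) → ℝ) + t • Pi.single i.succ 1 := by
    intro i y t
    ext j
    refine Fin.cases ?_ (fun k => ?_) j
    · simp
    · simp [Pi.single_apply]
  intro i y I hIo hIc hIU t₀ ht₀
  simp only [Set.mem_ofPred_eq, hcons] at hIU ⊢
  exact h i.succ _ I hIo hIc hIU t₀ ht₀

theorem exists_eq_div_cons {U : Set (Fin (N + 1) → ℝ)} {f : (Fin (N + 1) → ℝ) → ℝ}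
    (h : RegularOnAxisParallelIntervals (N + 1) U f) {I : Set ℝ} (hIo : IsOpen I)
    (hIc : I.OrdConnected) {y : Fin N → ℝ} (hIU : ∀ s ∈ I, Fin.cons s y ∈ U) {s₀ : ℝ}
    (hs₀ : s₀ ∈ I) : ∃ p q : ℝ[X], q.eval s₀ ≠ 0 ∧
      ∀ s ∈ I, q.eval s ≠ 0 → f (Fin.cons s y) = p.eval s / q.eval s := by
  have hcons : ∀ s : ℝ, (Fin.cons 0 y : Fin (N + 1) → ℝ) + s • Pi.single 0 1 = Fin.cons s y := by
    intro s
    ext j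
    refine Fin.cases ?_ (fun k => ?_) j
    · simp
    · simp
  simpa only [hcons] using h 0 (Fin.cons 0 y) I hIo hIc (fun s hs => hcons s ▸ hIU s hs) s₀ hs₀

theorem eq_div_of_infinite {U : Set (Fin (N + 1) → ℝ)} {f : (Fin (N + 1) → ℝ) → ℝ}
    (h : RegularOnAxisParallelIntervals (N + 1) U f) {A B : MvPolynomial (Fin (N + 1)) ℝ}
    {I T : Set ℝ} (hIo : IsOpen I) (hIc : I.OrdConnected) {y : Fin N → ℝ}
    (hIU : ∀ s ∈ I, Fin.cons s y ∈ U) (hTI : T ⊆ I) (hT : T.Infinite)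
    (hrep : ∀ s ∈ T, eval (Fin.cons s y) B ≠ 0 →
      f (Fin.cons s y) = eval (Fin.cons s y) A / eval (Fin.cons s y) B)
    {s₀ : ℝ} (hs₀ : s₀ ∈ I) (hB : eval (Fin.cons s₀ y) B ≠ 0) :
    f (Fin.cons s₀ y) = eval (Fin.cons s₀ y) A / eval (Fin.cons s₀ y) B := by
  obtain ⟨p, q, hq, hpq⟩ := h.exists_eq_div_cons hIo hIc hIU hs₀
  simp only [eval_eq_eval_mv_eval'] at hrep hB ⊢
  exact Polynomial.eq_eval_div_of_infinite (g := fun s => f (Fin.cons s y)) hpq hrep hTI hT hs₀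
    hq hB

theorem eqOnDiv_univ_pi {n : ℕ} {f : (Fin n → ℝ) → ℝ} {I I' : Fin n → Set ℝ}
    (hreg : RegularOnAxisParallelIntervals n (Set.univ.pi I) f) (hIo : ∀ k, IsOpen (I k))
    (hIc : ∀ k, (I k).OrdConnected) (hI' : ∀ k, (I' k).Infinite) (hI'I : ∀ k, I' k ⊆ I k)
    {A B D : MvPolynomial (Fin n) ℝ} (hD : D ≠ 0)
    (h : EqOnDiv f A B (Set.univ.pi I' ∩ {x | eval x D ≠ 0})) :
    EqOnDiv f A B (Set.univ.pi I) := by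
  induction n with
  | zero =>
    intro x _ hB
    refine h x ⟨fun k => k.elim0, fun hx => hD (MvPolynomial.funext fun z => ?_)⟩ hB
    rw [Subsingleton.elim z x, hx, map_zero]
  | succ N ih =>
    have hslice : ∀ s ∈ I' 0 \ {s | (finSuccEquiv ℝ N D).eval (C s) = 0},
        EqOnDiv (fun z => f (Fin.cons s z)) ((finSuccEquiv ℝ N A).eval (C s))
          ((finSuccEquiv ℝ N B).eval (C s)) (Set.univ.pi (Fin.tail I)) := by
      rintro s ⟨hs, hDs⟩
      refine ih ((hreg.comp_cons s).mono fun z hz => Fin.cons_mem_univ_pi.2 ⟨hI'I 0 hs, hz⟩)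
        (fun k => hIo _) (fun k => hIc _) (fun k => hI' _) (fun k => hI'I _) hDs
        fun z ⟨hz, hDz⟩ hBz => ?_
      simp only [Set.mem_ofPred_eq, eval_eval_C_finSuccEquiv] at hDz hBz ⊢
      exact h _ ⟨Fin.cons_mem_univ_pi.2 ⟨hs, hz⟩, hDz⟩ hBz
    intro x
    refine Fin.consCases (fun s₀ y => ?_) x
    intro hx hB
    obtain ⟨hs₀, hy⟩ := Fin.cons_mem_univ_pi.1 hx
    refine hreg.eq_div_of_infinite (hIo 0) (hIc 0) (fun s hs => Fin.cons_mem_univ_pi.2 ⟨hs, hy⟩)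
      (Set.sdiff_subset.trans (hI'I 0))
      ((hI' 0).sdiff (finite_setOf_eval_C_finSuccEquiv_eq_zero hD)) (fun s hs hBs => ?_) hs₀ hB
    have := hslice s hs y hy
    simp only [eval_eval_C_finSuccEquiv] at this
    exact this hBs

theorem eqOnDiv_of_isPreconnected {n : ℕ} {U : Set (Fin n → ℝ)}
    {f : (Fin n → ℝ) → ℝ} (hreg : RegularOnAxisParallelIntervals n U f) (hU : IsOpen U)
    (hconn : IsPreconnected U) {A B : MvPolynomial (Fin n) ℝ} {x₀ : Fin n → ℝ} (hx₀ : x₀ ∈ U)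
    (h₀ : ∀ᶠ x in 𝓝 x₀, eval x B ≠ 0 → f x = eval x A / eval x B) : EqOnDiv f A B U := by
  set G := {x | ∀ᶠ z in 𝓝 x, eval z B ≠ 0 → f z = eval z A / eval z B}
  suffices U ⊆ G from fun x hx => (this hx).self_of_nhds
  refine hconn.subset_of_closure_inter_subset isOpen_setOfPred_eventually_nhds ⟨x₀, hx₀, h₀⟩ ?_
  rintro x ⟨hxG, hxU⟩
  obtain ⟨r, hr, hrU⟩ := Metric.isOpen_iff.mp hU x hxU
  obtain ⟨w, hwG, hwx⟩ := Metric.mem_closure_iff.mp hxG r hr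
  obtain ⟨ε, hε, hεw⟩ := Metric.eventually_nhds_iff_ball.mp hwG
  have hδ : 0 < min ε (r - dist x w) := lt_min hε (sub_pos.2 hwx)
  have hinf : ∀ (c : ℝ) {ρ : ℝ}, 0 < ρ → (Metric.ball c ρ).Infinite := fun c ρ hρ => by
    simpa [Real.ball_eq_Ioo] using Set.Ioo_infinite (by linarith : c - ρ < c + ρ)
  -- extend the representation from a small cube around `w` to the cube of radius `r` around `x`
  have key := eqOnDiv_univ_pi (I := fun k => Metric.ball (x k) r)
    (I' := fun k => Metric.ball (w k) (min ε (r - dist x w))) (A := A) (B := B) (D := 1)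
    (hreg.mono (ball_pi x hr ▸ hrU)) (fun k => Metric.isOpen_ball)
    (fun k => by simpa [Real.ball_eq_Ioo] using Set.ordConnected_Ioo) (fun k => hinf _ hδ)
    (fun k => Metric.ball_subset_ball' ?_) one_ne_zero ?_
  · rw [← ball_pi x hr] at key
    exact Filter.mem_of_superset (Metric.ball_mem_nhds x hr) key
  · linarith [dist_le_pi_dist w x k, dist_comm w x, min_le_right ε (r - dist x w)]
  · rintro z ⟨hz, -⟩
    rw [← ball_pi w hδ] at hz
    exact hεw z (Metric.ball_subset_ball (min_le_left _ _) hz)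

end RegularOnAxisParallelIntervals

section LocalStep

variable {N : ℕ} {f : (Fin (N + 1) → ℝ) → ℝ}

def verticalDegreeLE (f : (Fin (N + 1) → ℝ) → ℝ) (J : Set ℝ) (d : ℕ) : Set (Fin N → ℝ) :=
  {y | ∃ a b : ℝ[X], b ≠ 0 ∧ a.natDegree ≤ d ∧ b.natDegree ≤ d ∧
    ∀ s ∈ J, b.eval s ≠ 0 → f (Fin.cons s y) = a.eval s / b.eval s}

theorem RegularOnAxisParallelIntervals.subset_iUnion_verticalDegreeLE
    {U : Set (Fin (N + 1) → ℝ)} (hreg : RegularOnAxisParallelIntervals (N + 1) U f)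
    {J : Set ℝ} (hJo : IsOpen J) (hJc : J.OrdConnected) (hJ : J.Nonempty) {V : Set (Fin N → ℝ)}
    (hJV : ∀ s ∈ J, ∀ y ∈ V, Fin.cons s y ∈ U) : V ⊆ ⋃ d, verticalDegreeLE f J d := by
  intro y hy
  obtain ⟨s₀, hs₀⟩ := hJ
  obtain ⟨p, q, hq, hpq⟩ := hreg.exists_eq_div_cons hJo hJc (fun s hs => hJV s hs y hy) hs₀
  exact Set.mem_iUnion.mpr ⟨max p.natDegree q.natDegree, p, q, by rintro rfl; simp at hq,
    le_max_left _ _, le_max_right _ _, hpq⟩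

theorem finite_setOf_eval_mul_ne_mul_eval {J : Set ℝ} {V : Set (Fin N → ℝ)}
    {P Q : ℝ → MvPolynomial (Fin N) ℝ} (hQ : ∀ s ∈ J, Q s ≠ 0)
    (hPQ : ∀ s ∈ J, EqOnDiv (fun y => f (Fin.cons s y)) (P s) (Q s) V) {d : ℕ}
    (hd : ∀ g : MvPolynomial (Fin N) ℝ, g ≠ 0 → ∃ y ∈ V ∩ verticalDegreeLE f J d, eval y g ≠ 0)
    {S : Finset ℝ} (hSJ : ↑S ⊆ J) (hS : 4 * d < S.card) {α β : (MvPolynomial (Fin N) ℝ)[X]}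
    (hα : α.natDegree ≤ 2 * d) (hβ : β.natDegree ≤ 2 * d)
    (hαβ : ∀ s ∈ S, α.eval (C s) * Q s = P s * β.eval (C s)) :
    {s ∈ J | α.eval (C s) * Q s ≠ P s * β.eval (C s)}.Finite := by
  by_contra hinf
  obtain ⟨T, hTbad, hTcard⟩ := Set.Infinite.exists_subset_card_eq hinf (d + 1)
  have hg : (∏ s ∈ S, Q s) * ∏ s ∈ T, Q s * (α.eval (C s) * Q s - P s * β.eval (C s)) ≠ 0 := by
    refine mul_ne_zero (Finset.prod_ne_zero_iff.mpr fun s hs => hQ s (hSJ hs))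
      (Finset.prod_ne_zero_iff.mpr fun s hs => mul_ne_zero (hQ s (hTbad hs).1) ?_)
    exact sub_ne_zero.mpr (hTbad hs).2
  obtain ⟨y, ⟨hyV, a, b, hb0, ha, hb, hab⟩, hy⟩ := hd _ hg
  simp only [map_mul, map_prod, mul_ne_zero_iff, Finset.prod_ne_zero_iff] at hy
  obtain ⟨hyS, hyT⟩ := hy
  have hslice : ∀ s ∈ J, eval y (Q s) ≠ 0 → f (Fin.cons s y) * eval y (Q s) = eval y (P s) :=
    fun s hs hQs => (eq_div_iff hQs).mp (hPQ s hs y hyV hQs)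
  have hline : ∀ s ∈ J, b.eval s ≠ 0 → f (Fin.cons s y) * b.eval s = a.eval s :=
    fun s hs hbs => (eq_div_iff hbs).mp (hab s hs hbs)
  have hagree : α.map (eval y) * b = a * β.map (eval y) := by
    refine Polynomial.mul_eq_mul_of_eval_eq_mul (g := fun s => f (Fin.cons s y))
      ((Polynomial.natDegree_map_le).trans hα) ((Polynomial.natDegree_map_le).trans hβ) ha hb
      hb0 S (by omega) (fun s hs => ?_) fun s hs hbs => (hline s (hSJ hs) hbs).symm
    have h := congrArg (eval y) (hαβ s hs)
    simp only [map_mul, eval_polynomial_eval_C, ← hslice s (hSJ hs) (hyS s hs)] at h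
    exact mul_right_cancel₀ (hyS s hs) (by linear_combination h)
  -- `b` vanishes on each of the `d + 1` slices of `T`
  refine hb0 (Polynomial.eq_zero_of_natDegree_lt_card_of_eval_eq_zero' b T
    (fun s hs => by_contra fun hbs => ?_) (by omega))
  obtain ⟨hQs, hHs⟩ := hyT s hs
  have hsJ := (hTbad hs).1
  have h := congrArg (Polynomial.eval s) hagree
  simp only [Polynomial.eval_mul, ← hline s hsJ hbs] at h
  have hαs : (α.map (eval y)).eval s = f (Fin.cons s y) * (β.map (eval y)).eval s :=
    mul_right_cancel₀ hbs (by linear_combination h)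
  apply hHs
  simp only [map_sub, map_mul, eval_polynomial_eval_C, hαs, ← hslice s hsJ hQs]
  ring

theorem RegularOnAxisParallelIntervals.exists_eqOnDiv_univ_pi {I : Fin (N + 1) → Set ℝ}
    (hreg : RegularOnAxisParallelIntervals (N + 1) (Set.univ.pi I) f) (hIo : ∀ k, IsOpen (I k))
    (hIc : ∀ k, (I k).OrdConnected) (hI : ∀ k, (I k).Infinite)
    {P Q : ℝ → MvPolynomial (Fin N) ℝ} (hQ : ∀ s ∈ I 0, Q s ≠ 0)
    (hPQ : ∀ s ∈ I 0,
      EqOnDiv (fun y => f (Fin.cons s y)) (P s) (Q s) (Set.univ.pi (Fin.tail I))) :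
    ∃ A B : MvPolynomial (Fin (N + 1)) ℝ, B ≠ 0 ∧ EqOnDiv f A B (Set.univ.pi I) := by
  have hJV : ∀ s ∈ I 0, ∀ y ∈ Set.univ.pi (Fin.tail I), Fin.cons s y ∈ Set.univ.pi I :=
    fun s hs y hy => Fin.cons_mem_univ_pi.2 ⟨hs, hy⟩
  obtain ⟨d, hd⟩ := exists_forall_exists_eval_ne_zero_of_subset_iUnion
    (isOpen_set_pi Set.finite_univ fun k _ => hIo _)
    (Set.univ_pi_nonempty_iff.2 fun k => (hI _).nonempty)
    (hreg.subset_iUnion_verticalDegreeLE (hIo 0) (hIc 0) (hI 0).nonempty hJV)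
  -- `4d + 1` heights and degree `2d`: enough room for `(α b - a β) b`, of degree `≤ 4d`
  obtain ⟨S, hSI, hScard⟩ := (hI 0).exists_subset_card_eq (4 * d + 1)
  obtain ⟨α, β, hα, hβ, hβ0, hαβ⟩ := Polynomial.exists_eval_mul_eq_mul_eval (ι := S)
    (e := 2 * d)
    (by rw [Fintype.card_coe, hScard]; omega) (by rw [Fintype.card_coe, hScard]; omega)
    ((C_injective _ _).comp Subtype.val_injective) (fun s => P s) (fun s => Q s)
    fun s => hQ s (hSI s.2)
  have hbad := finite_setOf_eval_mul_ne_mul_eval hQ hPQ hd hSI (by omega) hα hβ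
    fun s hs => hαβ ⟨s, hs⟩
  refine ⟨(finSuccEquiv ℝ N).symm α, (finSuccEquiv ℝ N).symm β, by simpa using hβ0, ?_⟩
  refine eqOnDiv_univ_pi hreg hIo hIc (I' := Fin.cons (I 0 \ _) (Fin.tail I))
    (Fin.forall_fin_succ.2 ⟨(hI 0).sdiff hbad, fun k => hI _⟩)
    (Fin.forall_fin_succ.2 ⟨Set.sdiff_subset, fun k => subset_rfl⟩) one_ne_zero ?_
  intro x
  refine Fin.consCases (fun s y => ?_) x
  rintro ⟨hx, -⟩ hB
  obtain ⟨⟨hs, hgood⟩, hy⟩ := Fin.cons_mem_univ_pi.1 hx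
  have := eqOnDiv_univ_pi ((hreg.comp_cons s).mono (hJV s hs)) (fun k => hIo _)
    (fun k => hIc _) (fun k => hI _) (fun k => subset_rfl) (hQ s hs)
    ((hPQ s hs).of_mul_eq_mul (not_not.1 fun h => hgood ⟨hs, h⟩)) y hy
  simp only [eval_cons_finSuccEquiv_symm] at hB ⊢
  exact this hB

end LocalStep

/-- **Corollary 7.2** (without the codimension-two claim). A function on a nonempty
connected open set `U ⊆ ℝⁿ` that is regular on every axis-parallel open interval
contained in `U` agrees with a rational function `p/q` on `{x ∈ U : q(x) ≠ 0}`. -/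
theorem rational_of_regular_on_axis_parallel_intervals
    (n : ℕ) (U : Set (Fin n → ℝ)) (hU : IsOpen U) (hne : U.Nonempty)
    (hconn : IsConnected U) (f : (Fin n → ℝ) → ℝ)
    (hreg : RegularOnAxisParallelIntervals n U f) :
    ∃ p q : MvPolynomial (Fin n) ℝ, q ≠ 0 ∧
      ∀ x ∈ U, eval x q ≠ 0 → f x = eval x p / eval x q := by
  induction n with
  | zero =>
    obtain ⟨x₀, -⟩ := hne
    exact ⟨C (f x₀), 1, one_ne_zero, fun x _ _ => by simp [Subsingleton.elim x x₀]⟩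
  | succ N ih =>
    obtain ⟨x₀, hx₀⟩ := hne
    obtain ⟨r, hr, hrU⟩ := Metric.isOpen_iff.mp hU x₀ hx₀
    set I : Fin (N + 1) → Set ℝ := fun k => Set.Ioo (x₀ k - r) (x₀ k + r)
    rw [ball_eq_univ_pi_Ioo x₀ hr] at hrU
    have hV : Metric.ball (Fin.tail x₀) r = Set.univ.pi (Fin.tail I) := ball_eq_univ_pi_Ioo _ hr
    have hslice (s : ℝ) (hs : s ∈ I 0) := ih (Set.univ.pi (Fin.tail I))
      (hV ▸ Metric.isOpen_ball) (hV ▸ Metric.nonempty_ball.2 hr)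
      (hV ▸ (convex_ball _ _).isConnected (Metric.nonempty_ball.2 hr)) _
      ((hreg.comp_cons s).mono fun y hy => hrU (Fin.cons_mem_univ_pi.2 ⟨hs, hy⟩))
    choose! P Q hQ hPQ using hslice
    obtain ⟨A, B, hB, hAB⟩ := (hreg.mono hrU).exists_eqOnDiv_univ_pi (fun k => isOpen_Ioo)
      (fun k => Set.ordConnected_Ioo) (fun k => Set.Ioo_infinite (by linarith)) hQ hPQ
    refine ⟨A, B, hB, hreg.eqOnDiv_of_isPreconnected hU hconn.isPreconnected hx₀ ?_⟩
    exact Filter.mem_of_superset (Metric.ball_mem_nhds x₀ hr) (ball_eq_univ_pi_Ioo x₀ hr ▸ hAB)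
end

section
/- Let f : ℂ^n → ℂ be a function and let Γ(f) = {(x, f(x)) : x ∈ ℂ^n} ⊆ ℂ^{n+1} be its graph. Then the following are equivalent: (a) f is continuous and rational; (b) f is continuous and every point (x,w) ∈ ℂ^{n+1} at which all complex polynomials in n+1 variables vanishing identically on Γ(f) vanish satisfies w = f(x) (i.e., Γ(f) equals the set of complex points of its Zariski closure). (Proposition 9.7 in the case of affine n-space.) -/
/-!
A continuous rational function `f = p / q` on `ℂⁿ` is a polynomial: `q * f = p` holds on the
dense set `{q ≠ 0}`, hence everywhere, and for every prime factor `π` of `q` the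
Nullstellensatz gives `π ∣ p`, so `π` can be cancelled. The graph of a polynomial `g` is the
zero set of `Y - g`.

Conversely, view polynomials on `ℂⁿ⁺¹` as polynomials in the last variable `Y` over
`A = ℂ[x₁, …, xₙ]` and let `P` be a nonzero element of minimal `Y`-degree `d` in the ideal of
the graph, with leading coefficient `c`. Pseudo-division by `P` shows that `c ^ k * F` is a
multiple of `P` for every `F` in the ideal, so over a point `x` with `c(x) ≠ 0` every root of
`P(x, ·)` lies in the Zariski closure of the graph, hence equals `f x`. Thus
`P(x, Y) = c(x) (Y - f x) ^ d`, and comparing the coefficients of `Y ^ (d - 1)` expresses `f`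
as a quotient of polynomials.
-/

open Polynomial

namespace Polynomial

theorem exists_mem_ne_zero_forall_natDegree_le {R : Type*} [Semiring R] {I : Ideal R[X]}
    (hI : I ≠ ⊥) : ∃ p ∈ I, p ≠ 0 ∧ ∀ q ∈ I, q ≠ 0 → p.natDegree ≤ q.natDegree := by
  classical
  obtain ⟨F, hF, hF0⟩ := Submodule.exists_mem_ne_zero_of_ne_bot hI
  have hex : ∃ d, ∃ p ∈ I, p ≠ 0 ∧ p.natDegree = d := ⟨_, F, hF, hF0, rfl⟩
  obtain ⟨p, hp, hp0, hpd⟩ := Nat.find_spec hex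
  exact ⟨p, hp, hp0, fun q hq hq0 => hpd ▸ Nat.find_min' hex ⟨q, hq, hq0, rfl⟩⟩

section PseudoDivision

variable {R : Type*} [CommRing R] [IsDomain R]

theorem exists_C_leadingCoeff_pow_mul_eq_mul_add {p : R[X]} (hp : p ≠ 0) (F : R[X]) :
    ∃ (k : ℕ) (Q r : R[X]), degree r < degree p ∧ C (p.leadingCoeff ^ k) * F = Q * p + r := by
  induction F using degree_lt_wf.induction with
  | _ F ih =>
  by_cases hF : degree F < degree p
  · exact ⟨0, 0, F, hF, by simp⟩
  have hF0 : F ≠ 0 := by rintro rfl; exact hF (by simpa [bot_lt_iff_ne_bot] using hp)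
  have hle : p.natDegree ≤ F.natDegree := natDegree_le_natDegree (not_lt.mp hF)
  set m := F.natDegree - p.natDegree
  set S := C F.leadingCoeff * X ^ m * p
  have hS : degree S = degree (C p.leadingCoeff * F) := by
    rw [degree_C_mul (leadingCoeff_ne_zero.mpr hp), degree_mul, degree_C_mul_X_pow _
      (leadingCoeff_ne_zero.mpr hF0), degree_eq_natDegree hp, degree_eq_natDegree hF0]
    norm_cast
    omega
  have hlc : leadingCoeff (C p.leadingCoeff * F) = leadingCoeff S := by
    simp only [S, leadingCoeff_mul, leadingCoeff_C, leadingCoeff_X_pow, mul_one]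
    ring
  obtain ⟨k, Q, r, hr, hG⟩ := ih (C p.leadingCoeff * F - S) <| by
    simpa [degree_C_mul (leadingCoeff_ne_zero.mpr hp)] using
      degree_sub_lt_left hS.symm (mul_ne_zero (by simpa using hp) hF0) hlc
  refine ⟨k + 1, Q + C (p.leadingCoeff ^ k * F.leadingCoeff) * X ^ m, r, hr, ?_⟩
  rw [pow_succ, C_mul, mul_assoc, ← sub_add_cancel (C p.leadingCoeff * F) S, mul_add, hG]
  simp only [S, C_mul]
  ring

theorem exists_dvd_C_leadingCoeff_pow_mul {I : Ideal R[X]} {p F : R[X]} (hp : p ∈ I)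
    (hp0 : p ≠ 0) (hmin : ∀ q ∈ I, q ≠ 0 → p.natDegree ≤ q.natDegree) (hF : F ∈ I) :
    ∃ k : ℕ, p ∣ C (p.leadingCoeff ^ k) * F := by
  obtain ⟨k, Q, r, hr, hk⟩ := exists_C_leadingCoeff_pow_mul_eq_mul_add hp0 F
  have hrI : r ∈ I := by
    rw [eq_sub_of_add_eq' hk.symm]
    exact I.sub_mem (I.mul_mem_left _ hF) (I.mul_mem_left _ hp)
  obtain rfl : r = 0 := by
    by_contra hr0
    exact (natDegree_lt_natDegree hr0 hr).not_ge (hmin r hrI hr0)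
  exact ⟨k, hk ▸ by simp⟩

end PseudoDivision

theorem nextCoeff_eq_of_forall_mem_roots_eq {K : Type*} [Field K] [IsAlgClosed K] {p : K[X]}
    {a : K} (h : ∀ z ∈ p.roots, z = a) : p.nextCoeff = -p.leadingCoeff * (p.natDegree * a) := by
  rw [(IsAlgClosed.splits p).nextCoeff_eq_neg_sum_roots_mul_leadingCoeff,
    Multiset.eq_replicate_card.mpr h, Multiset.sum_replicate, IsAlgClosed.card_roots_eq_natDegree,
    nsmul_eq_mul]

end Polynomial

namespace MvPolynomial

theorem prime_dvd_of_forall_eval_eq_zero {k : Type*} [Field k] [IsAlgClosed k] {σ : Type*}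
    [Finite σ] {π p : MvPolynomial σ k} (hπ : Prime π) (h : ∀ x, eval x π = 0 → eval x p = 0) :
    π ∣ p := by
  have hp : p ∈ vanishingIdeal k (zeroLocus k (Ideal.span {π})) := fun x hx =>
    h x (hx π (Ideal.mem_span_singleton_self π))
  rwa [vanishingIdeal_zeroLocus_eq_radical,
    ((Ideal.span_singleton_prime hπ.ne_zero).mpr hπ).radical, Ideal.mem_span_singleton] at hp

section ContinuousRational

variable {𝕜 : Type*} [NontriviallyNormedField 𝕜] {σ : Type*} [Fintype σ]

theorem dense_setOf_eval_ne_zero {q : MvPolynomial σ 𝕜} (hq : q ≠ 0) :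
    Dense {x : σ → 𝕜 | eval x q ≠ 0} := by
  refine Metric.dense_iff.mpr fun x r hr => ?_
  by_contra! h
  refine hq (funext_set (fun i => Metric.ball (x i) r)
    (fun i => infinite_of_mem_nhds (x i) (Metric.ball_mem_nhds _ hr)) fun y hy => ?_)
  rw [← ball_pi x hr] at hy
  by_contra hy'
  exact h.subset ⟨hy, by simpa using hy'⟩

variable [IsAlgClosed 𝕜]

theorem exists_eq_eval_of_continuous_of_eval_mul_eq {f : (σ → 𝕜) → 𝕜} (hf : Continuous f)
    {q p : MvPolynomial σ 𝕜} (hq : q ≠ 0) (hqf : ∀ x, eval x q * f x = eval x p) :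
    ∃ g : MvPolynomial σ 𝕜, ∀ x, f x = eval x g := by
  induction q using UniqueFactorizationMonoid.induction_on_prime generalizing p with
  | h₁ => exact absurd rfl hq
  | h₂ q hu =>
    obtain ⟨r, hr⟩ := hu.exists_left_inv
    refine ⟨r * p, fun x => ?_⟩
    rw [map_mul, ← hqf, ← mul_assoc, ← map_mul, hr, map_one, one_mul]
  | h₃ q π hq₀ hπ ih =>
    obtain ⟨p, rfl⟩ : π ∣ p := prime_dvd_of_forall_eval_eq_zero hπ fun x hx => by
      rw [← hqf, map_mul, hx, zero_mul, zero_mul]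
    refine ih hq₀ fun x => congrFun (Continuous.ext_on (dense_setOf_eval_ne_zero hπ.ne_zero)
      ((continuous_eval q).mul hf) (continuous_eval p) fun x hx => ?_) x
    have := hqf x
    simp only [map_mul, mul_assoc] at this
    exact mul_left_cancel₀ hx this

theorem exists_eq_eval_of_continuous_of_eq_div {f : (σ → 𝕜) → 𝕜} (hf : Continuous f)
    {q p : MvPolynomial σ 𝕜} (hq : q ≠ 0)
    (hpq : ∀ x, eval x q ≠ 0 → f x = eval x p / eval x q) :
    ∃ g : MvPolynomial σ 𝕜, ∀ x, f x = eval x g :=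
  exists_eq_eval_of_continuous_of_eval_mul_eq hf hq fun x => congrFun
    (Continuous.ext_on (dense_setOf_eval_ne_zero hq) ((continuous_eval q).mul hf)
      (continuous_eval p) fun x hx => by simp [hpq x hx, mul_div_cancel₀ _ hx]) x

end ContinuousRational

section GraphIdeal

variable {K : Type*} [Field K] {σ : Type*}

noncomputable def graphIdeal (f : (σ → K) → K) : Ideal (MvPolynomial σ K)[X] :=
  ⨅ y, RingHom.ker (eval₂RingHom (eval y) (f y))

theorem mem_graphIdeal {f : (σ → K) → K} {F : (MvPolynomial σ K)[X]} :
    F ∈ graphIdeal f ↔ ∀ y, F.eval₂ (eval y) (f y) = 0 := by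
  simp [graphIdeal]

theorem exists_eq_div_of_graphIdeal [IsAlgClosed K] [CharZero K] {f : (σ → K) → K}
    (hclosed : ∀ x w, (∀ F ∈ graphIdeal f, F.eval₂ (eval x) w = 0) → w = f x) :
    ∃ p q : MvPolynomial σ K, q ≠ 0 ∧ ∀ x, eval x q ≠ 0 → f x = eval x p / eval x q := by
  have hI : graphIdeal f ≠ ⊥ := fun h => by
    simpa using hclosed 0 (f 0 + 1) fun F hF => by simp [(Submodule.mem_bot _).mp (h ▸ hF)]
  obtain ⟨P, hP, hP0, hmin⟩ := exists_mem_ne_zero_forall_natDegree_le hI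
  set c := P.leadingCoeff
  set d := P.natDegree
  have hc : c ≠ 0 := leadingCoeff_ne_zero.mpr hP0
  have hd : d ≠ 0 := fun hd => hP0 <| by
    rw [eq_C_of_natDegree_eq_zero hd, mem_graphIdeal] at hP
    have h0 : P.coeff 0 = 0 := MvPolynomial.funext fun y => by simpa using hP y
    rw [eq_C_of_natDegree_eq_zero hd, h0, map_zero]
  have hroots : ∀ x, eval x c ≠ 0 → ∀ w ∈ (P.map (eval x)).roots, w = f x := by
    intro x hx w hw
    refine hclosed x w fun F hF => ?_
    obtain ⟨k, Q, hQ⟩ := exists_dvd_C_leadingCoeff_pow_mul hP hP0 hmin hF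
    have hPw : P.eval₂ (eval x) w = 0 := by
      rw [← Polynomial.eval_map]; exact (mem_roots'.mp hw).2
    have := congrArg (Polynomial.eval₂ (eval x) w) hQ
    rw [Polynomial.eval₂_mul, Polynomial.eval₂_mul, hPw, zero_mul, Polynomial.eval₂_C,
      map_pow] at this
    exact (mul_eq_zero.mp this).resolve_left (pow_ne_zero _ hx)
  refine ⟨-P.coeff (d - 1), C (d : K) * c, mul_ne_zero (by simpa using hd) hc, fun x hx => ?_⟩
  rw [map_mul, eval_C] at hx ⊢
  have hxc : eval x c ≠ 0 := right_ne_zero_of_mul hx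
  have hdeg : (P.map (eval x)).natDegree = d := natDegree_map_of_leadingCoeff_ne_zero _ hxc
  have hnext := nextCoeff_eq_of_forall_mem_roots_eq (hroots x hxc)
  rw [nextCoeff_of_natDegree_pos (hdeg ▸ Nat.pos_of_ne_zero hd), hdeg, Polynomial.coeff_map,
    leadingCoeff_map_of_leadingCoeff_ne_zero _ hxc] at hnext
  rw [eq_div_iff hx, map_neg, hnext]
  ring

end GraphIdeal

section LastVariable

variable {R : Type*} [CommRing R] {n : ℕ}

noncomputable def toPolynomialInLast :
    MvPolynomial (Fin (n + 1)) R →ₐ[R] (MvPolynomial (Fin n) R)[X] :=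
  aeval (Fin.snoc (fun i => Polynomial.C (X i)) Polynomial.X)

theorem eval₂_toPolynomialInLast (P : MvPolynomial (Fin (n + 1)) R) (x : Fin n → R) (w : R) :
    (toPolynomialInLast P).eval₂ (eval x) w = eval (Fin.snoc x w) P := by
  rw [toPolynomialInLast, aeval_def, ← Polynomial.coe_eval₂RingHom, eval₂_comp_left]
  congr 1
  · ext a; simp
  · ext i
    cases i using Fin.lastCases <;> simp

def IsZariskiClosedGraph (f : (Fin n → R) → R) : Prop :=
  ∀ (x : Fin n → R) (w : R), (∀ P : MvPolynomial (Fin (n + 1)) R,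
    (∀ y : Fin n → R, eval (Fin.snoc y (f y)) P = 0) → eval (Fin.snoc x w) P = 0) → w = f x

theorem isZariskiClosedGraph_eval (g : MvPolynomial (Fin n) R) :
    IsZariskiClosedGraph fun x => eval x g := by
  intro x w h
  have hsnoc (y : Fin n → R) (v : R) :
      eval (Fin.snoc y v) (X (Fin.last n) - rename Fin.castSucc g) = v - eval y g := by
    simp [eval_rename, Function.comp_def]
  have := h (X (Fin.last n) - rename Fin.castSucc g) fun y => by rw [hsnoc, sub_self]
  rwa [hsnoc, sub_eq_zero] at this

theorem IsZariskiClosedGraph.exists_eq_div {K : Type*} [Field K] [IsAlgClosed K] [CharZero K]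
    {f : (Fin n → K) → K} (hf : IsZariskiClosedGraph f) :
    ∃ p q : MvPolynomial (Fin n) K, q ≠ 0 ∧ ∀ x, eval x q ≠ 0 → f x = eval x p / eval x q :=
  exists_eq_div_of_graphIdeal fun x w h => hf x w fun P hP => by
    simpa [eval₂_toPolynomialInLast] using h (toPolynomialInLast P)
      (mem_graphIdeal.mpr fun y => by simpa [eval₂_toPolynomialInLast] using hP y)

end LastVariable

end MvPolynomial

open MvPolynomial

/-- **Proposition 9.7** (case of affine `n`-space). For a function `f : ℂⁿ → ℂ`, the
following are equivalent: (a) `f` is continuous and rational; (b) `f` is continuous and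
its graph equals the set of complex points of its Zariski closure, i.e. every point
`(x, w) ∈ ℂⁿ⁺¹` at which all polynomials vanishing on the graph vanish satisfies
`w = f x`. -/
theorem continuous_rational_iff_graph_zariski_closed_complex
    (n : ℕ) (f : (Fin n → ℂ) → ℂ) :
    (Continuous f ∧ ∃ p q : MvPolynomial (Fin n) ℂ, q ≠ 0 ∧
      ∀ x : Fin n → ℂ, eval x q ≠ 0 → f x = eval x p / eval x q) ↔
    (Continuous f ∧ ∀ (x : Fin n → ℂ) (w : ℂ),
      (∀ P : MvPolynomial (Fin (n + 1)) ℂ,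
        (∀ y : Fin n → ℂ, eval (Fin.snoc y (f y)) P = 0) →
        eval (Fin.snoc x w) P = 0) →
      w = f x) := by
  constructor
  · rintro ⟨hf, p, q, hq, hpq⟩
    obtain ⟨g, hg⟩ := exists_eq_eval_of_continuous_of_eq_div hf hq hpq
    obtain rfl : f = fun x => eval x g := funext hg
    exact ⟨hf, isZariskiClosedGraph_eval g⟩
  · rintro ⟨hf, hclosed⟩
    exact ⟨hf, IsZariskiClosedGraph.exists_eq_div hclosed⟩
end

section
/- Let U ⊆ ℝ^n be a nonempty connected open set and let f : U → ℝ be a rational function that is regular on axis-parallel intervals. If there exists a nonempty open subset U₀ ⊆ U such that f vanishes on a dense subset of U₀, then f is identically equal to 0 on U. (Lemma 7.6 in the case where every factor is the affine line.) -/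
open MvPolynomial

/-! Write `f = p / q` on `U`. The polynomial `p` vanishes on the dense subset `D ∩ {q ≠ 0}` of the
nonempty open set `U₀ ∩ {q ≠ 0}`, so `p = 0` by the identity principle, and `f = 0` off the zero
locus of `q`. Regularity pushes this into the zero locus, by induction on `n`: for all but finitely
many `c`, the slice `q (c, ·)` is a nonzero polynomial and `f (c, ·)` vanishes by induction; at any
point, `f` along the line in the first coordinate direction is a quotient of one-variable
polynomials vanishing at all but finitely many points, hence zero. -/

theorem MvPolynomial.eq_zero_of_isOpen_of_eval_eq_zero {σ 𝕜 : Type*} [Fintype σ]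
    [RCLike 𝕜] {p : MvPolynomial σ 𝕜} {O : Set (σ → 𝕜)} (hO : IsOpen O)
    (hne : O.Nonempty) (h : ∀ x ∈ O, eval x p = 0) : p = 0 := by
  obtain ⟨x₀, hx₀⟩ := hne
  have hzero : Set.EqOn (eval · p) 0 Set.univ :=
    (AnalyticOnNhd.eval_mvPolynomial p).eqOn_zero_of_preconnected_of_eventuallyEq_zero
      isPreconnected_univ (Set.mem_univ x₀) (Filter.eventually_of_mem (hO.mem_nhds hx₀) h)
  exact MvPolynomial.funext fun x ↦ by simpa using hzero (Set.mem_univ x)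

theorem MvPolynomial.eval_eval_C_finSuccEquiv_s11 {R : Type*} [CommRing R] {n : ℕ}
    (q : MvPolynomial (Fin (n + 1)) R) (c : R) (x : Fin n → R) :
    eval x ((finSuccEquiv R n q).eval (C c)) = eval (Fin.cons c x) q := by
  rw [eval_eq_eval_mv_eval', ← Polynomial.eval_map_apply, eval_C]

theorem MvPolynomial.finite_setOf_eval_C_finSuccEquiv_eq_zero_s11 {R : Type*} [CommRing R]
    [IsDomain R] {n : ℕ} {q : MvPolynomial (Fin (n + 1)) R} (hq : q ≠ 0) :
    {c : R | (finSuccEquiv R n q).eval (C c) = 0}.Finite :=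
  ((Polynomial.finite_setOfPred_isRoot ((finSuccEquiv R n).map_ne_zero_iff.mpr hq)).preimage
    (C_injective _ _).injOn)

theorem Fin.cons_add_smul_single_succ {R : Type*} [Semiring R] {n : ℕ} (c t : R)
    (x : Fin n → R) (i : Fin n) :
    (Fin.cons c x : Fin (n + 1) → R) + t • (Pi.single i.succ 1 : Fin (n + 1) → R) =
      Fin.cons c (x + t • (Pi.single i 1 : Fin n → R)) := by
  ext j
  refine Fin.cases ?_ (fun j ↦ ?_) j
  · simp [(Fin.succ_ne_zero i).symm]
  · simp [Pi.single_apply, Fin.succ_inj]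

theorem exists_pos_forall_Ioo_add_smul_mem {E : Type*} [TopologicalSpace E] [AddCommGroup E]
    [Module ℝ E] [ContinuousAdd E] [ContinuousSMul ℝ E] {U : Set E} (hU : IsOpen U) {x : E}
    (hx : x ∈ U) (v : E) : ∃ ε > (0 : ℝ), ∀ t ∈ Set.Ioo (-ε) ε, x + t • v ∈ U := by
  have hopen : IsOpen ((fun t : ℝ ↦ x + t • v) ⁻¹' U) :=
    hU.preimage (continuous_const.add (continuous_id.smul continuous_const))
  obtain ⟨ε, hε, hball⟩ := Metric.isOpen_iff.mp hopen (0 : ℝ) (by simpa using hx)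
  refine ⟨ε, hε, fun t ht ↦ hball ?_⟩
  rwa [Real.ball_eq_Ioo, zero_sub, zero_add]

theorem RegularOnAxisParallelIntervals.finCons {n : ℕ} {U : Set (Fin (n + 1) → ℝ)}
    {f : (Fin (n + 1) → ℝ) → ℝ} (hreg : RegularOnAxisParallelIntervals (n + 1) U f) (c : ℝ) :
    RegularOnAxisParallelIntervals n {x | Fin.cons c x ∈ U} (fun x ↦ f (Fin.cons c x)) := by
  intro i x I hI hIconn hline t₀ ht₀
  simp only [Set.mem_ofPred_eq, ← Fin.cons_add_smul_single_succ] at hline ⊢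
  exact hreg i.succ (Fin.cons c x) I hI hIconn hline t₀ ht₀

section Regular

variable {n : ℕ} {U : Set (Fin n → ℝ)} {f : (Fin n → ℝ) → ℝ}

theorem RegularOnAxisParallelIntervals.eq_zero_of_eq_zero_on_line
    (hreg : RegularOnAxisParallelIntervals n U f) (hU : IsOpen U) {x : Fin n → ℝ} (hx : x ∈ U)
    (i : Fin n) {B : Set ℝ} (hB : B.Finite)
    (h : ∀ t ∉ B, x + t • Pi.single i 1 ∈ U → f (x + t • Pi.single i 1) = 0) : f x = 0 := by
  obtain ⟨ε, hε, hline⟩ := exists_pos_forall_Ioo_add_smul_mem hU hx (Pi.single i 1)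
  have h0 : (0 : ℝ) ∈ Set.Ioo (-ε) ε := ⟨neg_neg_of_pos hε, hε⟩
  obtain ⟨p, q, hq0, hrep⟩ := hreg i x _ isOpen_Ioo Set.ordConnected_Ioo hline 0 h0
  have hq : q ≠ 0 := by rintro rfl; simp at hq0
  have hp : p = 0 := by
    refine Polynomial.eq_zero_of_infinite_isRoot p
      (((Set.Ioo_infinite (neg_lt_self hε)).sdiff
        ((Polynomial.finite_setOfPred_isRoot hq).union hB)).mono ?_)
    rintro t ⟨ht, hbad⟩
    have hqt : q.eval t ≠ 0 := fun h ↦ hbad (Or.inl h)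
    have := (h t (fun h ↦ hbad (Or.inr h)) (hline t ht)).symm.trans (hrep t ht hqt)
    exact (div_eq_zero_iff.mp this.symm).resolve_right hqt
  simpa [hp] using hrep 0 h0 hq0

theorem RegularOnAxisParallelIntervals.eq_zero_of_eq_zero_of_eval_ne_zero
    (hreg : RegularOnAxisParallelIntervals n U f) (hU : IsOpen U) {q : MvPolynomial (Fin n) ℝ}
    (hq : q ≠ 0) (h : ∀ x ∈ U, eval x q ≠ 0 → f x = 0) : ∀ x ∈ U, f x = 0 := by
  induction n with
  | zero =>
    intro x hx
    obtain ⟨a, rfl⟩ := C_surjective (Fin 0) q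
    exact h x hx (by simpa using hq)
  | succ n ih =>
    set Q := finSuccEquiv ℝ n q
    have hgood : ∀ y ∈ U, Q.eval (C (y 0)) ≠ 0 → f y = 0 := by
      intro y hy hQy
      have hslice := ih (hreg.finCons (y 0))
        (hU.preimage (continuous_const.finCons continuous_id)) hQy
        (fun x hx hx' ↦ h _ hx (by rwa [eval_eval_C_finSuccEquiv_s11] at hx'))
        (Fin.tail y) (by simpa using hy)
      simpa using hslice
    intro x hx
    refine hreg.eq_zero_of_eq_zero_on_line hU hx 0
      ((finite_setOf_eval_C_finSuccEquiv_eq_zero_s11 hq).preimage (add_right_injective (x 0)).injOn)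
      fun t ht hxt ↦ hgood _ hxt ?_
    simpa using ht

end Regular

theorem vanishes_of_rational_and_vanishing_on_dense_subset_general
    (n : ℕ) (U : Set (Fin n → ℝ)) (hU : IsOpen U) (f : (Fin n → ℝ) → ℝ)
    (hrat : ∃ p q : MvPolynomial (Fin n) ℝ, q ≠ 0 ∧
      ∀ x ∈ U, eval x q ≠ 0 → f x = eval x p / eval x q)
    (hreg : RegularOnAxisParallelIntervals n U f)
    (U₀ : Set (Fin n → ℝ)) (hU₀sub : U₀ ⊆ U) (hU₀ne : U₀.Nonempty)
    (hU₀open : IsOpen U₀)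
    (D : Set (Fin n → ℝ)) (hDdense : U₀ ⊆ closure D)
    (hDzero : ∀ x ∈ D, f x = 0) :
    ∀ x ∈ U, f x = 0 := by
  obtain ⟨p, q, hq, hpq⟩ := hrat
  set O := U₀ ∩ {x | eval x q ≠ 0}
  have hO : IsOpen O := hU₀open.inter (isOpen_ne_fun (continuous_eval q) continuous_const)
  have hOne : O.Nonempty := by
    by_contra hempty
    refine hq (eq_zero_of_isOpen_of_eval_eq_zero hU₀open hU₀ne fun x hx ↦ ?_)
    by_contra hqx
    exact hempty ⟨x, hx, hqx⟩
  have hpOD : Set.EqOn (eval · p) 0 (O ∩ D) := fun x ⟨⟨hxU₀, hqx⟩, hxD⟩ ↦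
    (div_eq_zero_iff.mp ((hpq x (hU₀sub hxU₀) hqx).symm.trans (hDzero x hxD))).resolve_right hqx
  have hp : p = 0 := eq_zero_of_isOpen_of_eval_eq_zero hO hOne fun x hx ↦
    hpOD.closure (continuous_eval p) continuous_const
      (hO.inter_closure ⟨hx, hDdense hx.1⟩)
  refine hreg.eq_zero_of_eq_zero_of_eval_ne_zero hU hq fun x hx hqx ↦ ?_
  rw [hpq x hx hqx, hp, map_zero, zero_div]

/-- **Lemma 7.6** (case where every factor is the affine line). A rational function on a
nonempty connected open set `U ⊆ ℝⁿ` that is regular on axis-parallel intervals and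
vanishes on a dense subset of some nonempty open `U₀ ⊆ U` is identically zero on `U`. -/
theorem vanishes_of_rational_and_vanishing_on_dense_subset
    (n : ℕ) (U : Set (Fin n → ℝ)) (hU : IsOpen U) (hne : U.Nonempty)
    (hconn : IsConnected U) (f : (Fin n → ℝ) → ℝ)
    (hrat : ∃ p q : MvPolynomial (Fin n) ℝ, q ≠ 0 ∧
      ∀ x ∈ U, eval x q ≠ 0 → f x = eval x p / eval x q)
    (hreg : RegularOnAxisParallelIntervals n U f)
    (U₀ : Set (Fin n → ℝ)) (hU₀sub : U₀ ⊆ U) (hU₀ne : U₀.Nonempty)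
    (hU₀open : IsOpen U₀)
    (D : Set (Fin n → ℝ)) (hDsub : D ⊆ U₀) (hDdense : U₀ ⊆ closure D)
    (hDzero : ∀ x ∈ D, f x = 0) :
    ∀ x ∈ U, f x = 0 :=
  vanishes_of_rational_and_vanishing_on_dense_subset_general n U hU f hrat hreg U₀ hU₀sub hU₀ne
    hU₀open D hDdense hDzero
end

section
/- Let S(ℝ) = {(x,y,z) ∈ ℝ³ : x³ = (1 + z²)·y³} and define f : S(ℝ) → ℝ by f(x,y,z) = (1 + z²)^{1/3}. Then: (i) f(x,y,z) = x/y for every (x,y,z) ∈ S(ℝ) with y ≠ 0; (ii) f is continuous on S(ℝ); (iii) the restriction of f to the z-axis is not rational: there do not exist one-variable real polynomials p, q with q not the zero polynomial such that (1 + z²)^{1/3} = p(z)/q(z) for every z ∈ ℝ with q(z) ≠ 0 (equivalently, there are no real polynomials p, q with q ≠ 0 and p³ = (1 + X²)·q³). Hence f is a continuous rational function on S(ℝ) that is not hereditarily rational. (Example 1.5.) -/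
/-- **Example 1.5.** On the surface `S(ℝ) = {x³ = (1+z²)y³} ⊆ ℝ³`, the function
`f(x,y,z) = (1+z²)^{1/3}` equals `x/y` off the `z`-axis, is continuous on `S(ℝ)`, but
its restriction to the `z`-axis is not a rational function; so `f` is continuous
rational but not hereditarily rational. -/
theorem example_surface_continuous_rational_not_hereditarily_rational :
    (∀ x y z : ℝ, x ^ 3 = (1 + z ^ 2) * y ^ 3 → y ≠ 0 →
      (1 + z ^ 2) ^ ((1 : ℝ) / 3) = x / y) ∧
    ContinuousOn (fun v : ℝ × ℝ × ℝ => (1 + v.2.2 ^ 2) ^ ((1 : ℝ) / 3))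
      {v : ℝ × ℝ × ℝ | v.1 ^ 3 = (1 + v.2.2 ^ 2) * v.2.1 ^ 3} ∧
    ¬ ∃ p q : Polynomial ℝ, q ≠ 0 ∧ ∀ z : ℝ, q.eval z ≠ 0 →
      (1 + z ^ 2) ^ ((1 : ℝ) / 3) = p.eval z / q.eval z := by
  refine ⟨?_, ?_, ?_⟩
  · intro x y z hxyz hy
    have hpos : (0:ℝ) < 1 + z ^ 2 := by positivity
    have hcube : (x / y) ^ 3 = 1 + z ^ 2 := by
      field_simp
      linarith [hxyz]
    have hxy : 0 < x / y := by
      have := hcube ▸ hpos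
      nlinarith [sq_nonneg (x/y), sq_nonneg (x/y + 1), sq_nonneg (x/y - 1)]
    rw [← hcube]
    have : ((1:ℝ)/3) = ((3:ℕ):ℝ)⁻¹ := by norm_num
    rw [this, Real.pow_rpow_inv_natCast hxy.le (by norm_num)]
  · apply Continuous.continuousOn
    apply Continuous.rpow_const
    · fun_prop
    · intro v
      right; norm_num
  · rintro ⟨p, q, hq, h⟩
    have hroots : {z : ℝ | q.IsRoot z}.Finite := Polynomial.finite_setOf_isRoot hq
    have hinf : {z : ℝ | q.eval z ≠ 0}.Infinite := by
      have : {z : ℝ | q.eval z ≠ 0} = {z : ℝ | q.IsRoot z}ᶜ := by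
        ext z; simp [Polynomial.IsRoot]
      rw [this]
      exact hroots.infinite_compl
    have key : ∀ z : ℝ, q.eval z ≠ 0 → (p.eval z) ^ 3 = (1 + z ^ 2) * (q.eval z) ^ 3 := by
      intro z hz
      have hpos : (0:ℝ) < 1 + z ^ 2 := by positivity
      have h1 := h z hz
      have h2 : ((1 + z ^ 2) ^ ((1:ℝ)/3)) ^ (3:ℕ) = 1 + z ^ 2 := by
        have : ((1:ℝ)/3) = ((3:ℕ):ℝ)⁻¹ := by norm_num
        rw [this, Real.rpow_inv_natCast_pow hpos.le (by norm_num)]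
      rw [h1] at h2
      field_simp at h2
      linarith [h2]
    have hpoly : p ^ 3 - (Polynomial.C 1 + Polynomial.X ^ 2) * q ^ 3 = 0 := by
      apply Polynomial.eq_zero_of_infinite_isRoot
      apply hinf.mono
      intro z hz
      have hk := key z hz
      simp only [Set.mem_setOf_eq, Polynomial.IsRoot, Polynomial.eval_sub, Polynomial.eval_mul,
        Polynomial.eval_add, Polynomial.eval_pow, Polynomial.eval_C, Polynomial.eval_X]
      linarith
    have heq : p ^ 3 = (Polynomial.C 1 + Polynomial.X ^ 2) * q ^ 3 := by
      linear_combination hpoly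
    have hq2 : (Polynomial.C 1 + Polynomial.X ^ 2 : Polynomial ℝ) ≠ 0 := by
      intro hcon
      have := congrArg (Polynomial.eval (0:ℝ)) hcon
      simp at this
    have hp : p ≠ 0 := by
      intro hp0
      rw [hp0] at heq
      simp only [zero_pow, ne_eq, OfNat.ofNat_ne_zero, not_false_eq_true] at heq
      exact (mul_ne_zero hq2 (pow_ne_zero 3 hq)) heq.symm
    have hdeg : (p ^ 3).natDegree = ((Polynomial.C 1 + Polynomial.X ^ 2) * q ^ 3).natDegree :=
      by rw [heq]
    rw [Polynomial.natDegree_pow, Polynomial.natDegree_mul hq2 (pow_ne_zero 3 hq),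
      Polynomial.natDegree_pow] at hdeg
    have h2deg : (Polynomial.C 1 + Polynomial.X ^ 2 : Polynomial ℝ).natDegree = 2 := by
      compute_degree!
    rw [h2deg] at hdeg
    omega
end

section
/- Define f : ℝ² → ℝ by f(x,y) = (x⁸ + y·(x² − y³)²)/(x¹⁰ + (x² − y³)²) for (x,y) ≠ (0,0) and f(0,0) = 0. Then: (i) f(x,y) = 1/x² for every (x,y) ≠ (0,0) with x² = y³; consequently f is not bounded on V ∩ {(x,y) : x² = y³} for any neighborhood V of (0,0), and f is not continuous at (0,0); (ii) f is regular on smooth algebraic arcs: for every irreducible polynomial P ∈ ℝ[x,y] and every smooth algebraic arc A of the plane curve P = 0, the restriction f|_A is regular. (Example 2.3.) -/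
open MvPolynomial

/-- `A` is a smooth algebraic arc of the plane curve `P = 0`: it consists of smooth real
points of the curve, is open in the subspace topology of the real zero set of `P`, and
is homeomorphic to `ℝ`. -/
def IsSmoothAlgebraicArc (P : MvPolynomial (Fin 2) ℝ) (A : Set (ℝ × ℝ)) : Prop :=
  (∀ z ∈ A, eval ![z.1, z.2] P = 0 ∧
    (eval ![z.1, z.2] (pderiv 0 P) ≠ 0 ∨ eval ![z.1, z.2] (pderiv 1 P) ≠ 0)) ∧
  (∃ O : Set (ℝ × ℝ), IsOpen O ∧
    A = O ∩ {z : ℝ × ℝ | eval ![z.1, z.2] P = 0}) ∧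
  Nonempty (A ≃ₜ ℝ)


set_option maxHeartbeats 1000000
set_option synthInstance.maxHeartbeats 400000

open MvPolynomial

namespace ArcEx

variable {R : Type*} [CommRing R]

def NN (x y : R) : R := x^8 + y*(x^2-y^3)^2
def DD (x y : R) : R := x^10 + (x^2-y^3)^2

def q1e (x y α β A B Cc : R) : R :=
  (β + B*x + Cc*y)^7 *
    ((β + B*x + Cc*y)^6*x^6 + ((β + B*x + Cc*y)^3 - x*(-(α + A*x))^3)^2)

def p1e (x y α β A B Cc : R) : R :=
  x * ((β + B*x + Cc*y)^7*x^3 +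
      (-(α + A*x))*((β + B*x + Cc*y)^3 - x*(-(α + A*x))^3)^2) * (β + B*x + Cc*y)^6

def q2e (x y α A B Cc : R) : R :=
  (α + A*x + B*y)^10 *
    (y^14*(-Cc)^10 + (α + A*x + B*y)^6*(y*(-Cc)^2 - (α + A*x + B*y)^2)^2)

def p2e (x y α A B Cc : R) : R :=
  y * ((α + A*x + B*y)^2*y^9*(-Cc)^8 +
      (α + A*x + B*y)^6*(y*(-Cc)^2 - (α + A*x + B*y)^2)^2) * (α + A*x + B*y)^10

lemma key1' (x y u s : R) (h2 : u*y = x*s) :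
    u^7*(u^6*x^6 + (u^3 - x*s^3)^2) * (x^8 + y*(x^2-y^3)^2)
    = x*(u^7*x^3 + s*(u^3 - x*s^3)^2)*u^6 * (x^10 + (x^2-y^3)^2) := by
  have h3 : u^3*(x^2-y^3) = x^2*(u^3 - x*s^3) := by
    have hcube : (u*y)^3 = (x*s)^3 := by rw [h2]
    linear_combination -hcube
  have h4 : u^6*(x^10 + (x^2-y^3)^2) = x^4*(u^6*x^6 + (u^3 - x*s^3)^2) := by
    linear_combination (u^3*(x^2-y^3) + x^2*(u^3 - x*s^3)) * h3
  have h5 : u^7*(x^8 + y*(x^2-y^3)^2) = x^5*(u^7*x^3 + s*(u^3 - x*s^3)^2) := by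
    linear_combination ((u^3*(x^2-y^3))^2)*h2
      + (x*s*(u^3*(x^2-y^3) + x^2*(u^3 - x*s^3)))*h3
  linear_combination (u^6*x^6 + (u^3 - x*s^3)^2) * h5
    - (x*(u^7*x^3 + s*(u^3 - x*s^3)^2)) * h4

lemma key1 (x y α β A B Cc : R)
    (h : α*x + β*y + A*x^2 + B*(x*y) + Cc*y^2 = 0) :
    q1e x y α β A B Cc * NN x y = p1e x y α β A B Cc * DD x y :=
  key1' x y (β + B*x + Cc*y) (-(α + A*x)) (by linear_combination h)

lemma key2' (x y u t : R) (h2 : u*x = y^2*t) :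
    u^10*(y^14*t^10 + u^6*(y*t^2 - u^2)^2) * (x^8 + y*(x^2-y^3)^2)
    = y*(u^2*y^9*t^8 + u^6*(y*t^2 - u^2)^2)*u^10 * (x^10 + (x^2-y^3)^2) := by
  have h3 : u^2*(x^2-y^3) = y^3*(y*t^2 - u^2) := by
    linear_combination (u*x + y^2*t) * h2
  have h10 : (u*x)^10 = (y^2*t)^10 := by rw [h2]
  have h8 : (u*x)^8 = (y^2*t)^8 := by rw [h2]
  have h4 : u^10*(x^10 + (x^2-y^3)^2) = y^6*(y^14*t^10 + u^6*(y*t^2 - u^2)^2) := by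
    linear_combination h10 + (u^6*(u^2*(x^2-y^3) + y^3*(y*t^2 - u^2)))*h3
  have h5 : u^10*(x^8 + y*(x^2-y^3)^2) = y^7*(u^2*y^9*t^8 + u^6*(y*t^2 - u^2)^2) := by
    linear_combination u^2*h8 + (u^6*y*(u^2*(x^2-y^3) + y^3*(y*t^2 - u^2)))*h3
  linear_combination (y^14*t^10 + u^6*(y*t^2 - u^2)^2)*h5
    - (y*(u^2*y^9*t^8 + u^6*(y*t^2 - u^2)^2))*h4

lemma key2 (x y α A B Cc : R)
    (h : α*x + A*x^2 + B*(x*y) + Cc*y^2 = 0) :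
    q2e x y α A B Cc * NN x y = p2e x y α A B Cc * DD x y :=
  key2' x y (α + A*x + B*y) (-Cc) (by linear_combination h)

-- ring-hom commutation lemmas
section maps
variable {S : Type*} [CommRing S] (φ : R →+* S)

lemma NN_map (x y : R) : φ (NN x y) = NN (φ x) (φ y) := by
  simp [NN, map_add, map_mul, map_pow, map_sub]

lemma DD_map (x y : R) : φ (DD x y) = DD (φ x) (φ y) := by
  simp [DD, map_add, map_mul, map_pow, map_sub]

lemma q1e_map (x y α β A B Cc : R) :
    φ (q1e x y α β A B Cc) = q1e (φ x) (φ y) (φ α) (φ β) (φ A) (φ B) (φ Cc) := by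
  simp [q1e, map_add, map_mul, map_pow, map_sub, map_neg]

lemma p1e_map (x y α β A B Cc : R) :
    φ (p1e x y α β A B Cc) = p1e (φ x) (φ y) (φ α) (φ β) (φ A) (φ B) (φ Cc) := by
  simp [p1e, map_add, map_mul, map_pow, map_sub, map_neg]

lemma q2e_map (x y α A B Cc : R) :
    φ (q2e x y α A B Cc) = q2e (φ x) (φ y) (φ α) (φ A) (φ B) (φ Cc) := by
  simp [q2e, map_add, map_mul, map_pow, map_sub, map_neg]

lemma p2e_map (x y α A B Cc : R) :
    φ (p2e x y α A B Cc) = p2e (φ x) (φ y) (φ α) (φ A) (φ B) (φ Cc) := by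
  simp [p2e, map_add, map_mul, map_pow, map_sub, map_neg]

end maps

lemma q1e_zero (α β A B Cc : R) : q1e 0 0 α β A B Cc = β^13 := by
  simp only [q1e]; ring

lemma p1e_zero (α β A B Cc : R) : p1e 0 0 α β A B Cc = 0 := by
  simp only [p1e]; ring

lemma q2e_zero (α A B Cc : R) : q2e 0 0 α A B Cc = α^20 := by
  simp only [q2e]; ring

lemma p2e_zero (α A B Cc : R) : p2e 0 0 α A B Cc = 0 := by
  simp only [p2e]; ring

end ArcEx

open MvPolynomial

namespace ArcEx

lemma decompXY (P : MvPolynomial (Fin 2) ℝ) :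
    ∃ q1 q2 : MvPolynomial (Fin 2) ℝ,
      P = C (eval ![(0:ℝ), 0] P) + X 0 * q1 + X 1 * q2 := by
  induction P using MvPolynomial.induction_on with
  | C r => exact ⟨0, 0, by simp⟩
  | add p q hp hq =>
      obtain ⟨p1, p2, hp⟩ := hp
      obtain ⟨q1, q2, hq⟩ := hq
      refine ⟨p1 + q1, p2 + q2, ?_⟩
      rw [map_add, C_add]
      linear_combination hp + hq
  | mul_X p n hp =>
      obtain ⟨p1, p2, hp⟩ := hp
      fin_cases n
      · refine ⟨p, 0, ?_⟩
        show p * X 0 = C (eval ![(0:ℝ), 0] (p * X 0)) + X 0 * p + X 1 * 0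
        have h0 : eval ![(0:ℝ), 0] (p * X 0) = 0 := by simp
        rw [h0, map_zero]; ring
      · refine ⟨0, p, ?_⟩
        show p * X 1 = C (eval ![(0:ℝ), 0] (p * X 1)) + X 0 * 0 + X 1 * p
        have h0 : eval ![(0:ℝ), 0] (p * X 1) = 0 := by simp
        rw [h0, map_zero]; ring

lemma decompQuad (P : MvPolynomial (Fin 2) ℝ) (h0 : eval ![(0:ℝ), 0] P = 0) :
    ∃ (α β : ℝ) (A' B' C' : MvPolynomial (Fin 2) ℝ),
      P = C α * X 0 + C β * X 1 + A' * X 0^2 + B' * (X 0 * X 1) + C' * X 1^2 ∧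
      eval ![(0:ℝ), 0] (pderiv 0 P) = α ∧ eval ![(0:ℝ), 0] (pderiv 1 P) = β := by
  obtain ⟨q1, q2, h1⟩ := decompXY P
  obtain ⟨a1, a2, hq1⟩ := decompXY q1
  obtain ⟨b1, b2, hq2⟩ := decompXY q2
  have hP : P = C (eval ![(0:ℝ),0] q1) * X 0 + C (eval ![(0:ℝ),0] q2) * X 1 +
      a1 * X 0^2 + (a2 + b1) * (X 0 * X 1) + b2 * X 1^2 := by
    rw [h1, h0, map_zero]
    nth_rewrite 1 [hq1, hq2]
    ring
  refine ⟨_, _, a1, a2 + b1, b2, hP, ?_, ?_⟩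
  · rw [hP]
    simp [pderiv_mul, pderiv_X_self, pderiv_X_of_ne, pderiv_C, pow_two]
  · rw [hP]
    simp [pderiv_mul, pderiv_X_self, pderiv_X_of_ne, pderiv_C, pow_two]

end ArcEx

namespace ArcEx

open Ideal in
lemma regular_at_origin (P : MvPolynomial (Fin 2) ℝ)
    (h0 : eval ![(0:ℝ), 0] P = 0)
    (hsm : eval ![(0:ℝ), 0] (pderiv 0 P) ≠ 0 ∨ eval ![(0:ℝ), 0] (pderiv 1 P) ≠ 0) :
    ∃ p q : MvPolynomial (Fin 2) ℝ, eval ![(0:ℝ), 0] q ≠ 0 ∧ eval ![(0:ℝ), 0] p = 0 ∧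
      P ∣ q * NN (X 0) (X 1) - p * DD (X 0) (X 1) := by
  obtain ⟨α, β, A', B', C', hP, hα, hβ⟩ := decompQuad P h0
  set π := Ideal.Quotient.mk (Ideal.span {P}) with hπ
  have hπP : π P = 0 := by
    rw [hπ, Ideal.Quotient.eq_zero_iff_mem]
    exact Ideal.mem_span_singleton_self P
  have hrel : π (C α) * π (X 0) + π (C β) * π (X 1) + π A' * (π (X 0))^2
      + π B' * (π (X 0) * π (X 1)) + π C' * (π (X 1))^2 = 0 := by
    have h : π (C α * X 0 + C β * X 1 + A' * X 0^2 + B' * (X 0 * X 1) + C' * X 1^2) = 0 := by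
      rw [← hP]; exact hπP
    simpa only [map_add, _root_.map_mul, map_pow] using h
  by_cases hb : β = 0
  · -- vertical tangent case : use key2
    have ha : α ≠ 0 := by
      rcases hsm with h | h
      · rwa [hα] at h
      · exact absurd (hβ.trans hb) h
    refine ⟨p2e (X 0) (X 1) (C α) A' B' C', q2e (X 0) (X 1) (C α) A' B' C', ?_, ?_, ?_⟩
    · rw [q2e_map (eval ![(0:ℝ), 0])]
      simp only [eval_X, eval_C, Matrix.cons_val_zero, Matrix.cons_val_one, Matrix.head_cons]
      rw [q2e_zero]
      exact pow_ne_zero _ ha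
    · rw [p2e_map (eval ![(0:ℝ), 0])]
      simp only [eval_X, eval_C, Matrix.cons_val_zero, Matrix.cons_val_one, Matrix.head_cons]
      rw [p2e_zero]
    · rw [← Ideal.mem_span_singleton, ← Ideal.Quotient.eq_zero_iff_mem, ← hπ, map_sub,
        sub_eq_zero, _root_.map_mul, _root_.map_mul, q2e_map π, p2e_map π, NN_map π, DD_map π]
      refine key2 _ _ _ _ _ _ ?_
      have hrel2 := hrel
      rw [hb] at hrel2
      simp only [map_zero, zero_mul, add_zero, mul_zero] at hrel2
      linear_combination hrel2
  · -- use key1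
    refine ⟨p1e (X 0) (X 1) (C α) (C β) A' B' C', q1e (X 0) (X 1) (C α) (C β) A' B' C',
      ?_, ?_, ?_⟩
    · rw [q1e_map (eval ![(0:ℝ), 0])]
      simp only [eval_X, eval_C, Matrix.cons_val_zero, Matrix.cons_val_one, Matrix.head_cons]
      rw [q1e_zero]
      exact pow_ne_zero _ hb
    · rw [p1e_map (eval ![(0:ℝ), 0])]
      simp only [eval_X, eval_C, Matrix.cons_val_zero, Matrix.cons_val_one, Matrix.head_cons]
      rw [p1e_zero]
    · rw [← Ideal.mem_span_singleton, ← Ideal.Quotient.eq_zero_iff_mem, ← hπ, map_sub,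
        sub_eq_zero, _root_.map_mul, _root_.map_mul, q1e_map π, p1e_map π, NN_map π, DD_map π]
      exact key1 _ _ _ _ _ _ _ hrel

end ArcEx

namespace ArcEx

lemma Dne (z : ℝ × ℝ) (hz : z ≠ (0, 0)) : z.1^10 + (z.1^2 - z.2^3)^2 ≠ 0 := by
  intro h
  have ha : (0:ℝ) ≤ z.1^10 := by positivity
  have hb : (0:ℝ) ≤ (z.1^2 - z.2^3)^2 := sq_nonneg _
  have h1 : z.1^10 = 0 := by linarith
  have h2 : (z.1^2 - z.2^3)^2 = 0 := by linarith
  have hx : z.1 = 0 := (pow_eq_zero_iff (by norm_num : (10:ℕ) ≠ 0)).1 h1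
  have h3 : z.1^2 - z.2^3 = 0 := (pow_eq_zero_iff (by norm_num : (2:ℕ) ≠ 0)).1 h2
  have hy : z.2 = 0 := by
    have h4 : z.2^3 = 0 := by rw [hx] at h3; linarith [h3]
    exact (pow_eq_zero_iff (by norm_num : (3:ℕ) ≠ 0)).1 h4
  exact hz (by rw [Prod.ext_iff]; exact ⟨hx, hy⟩)

end ArcEx


/-- **Example 2.3.** The function
`f(x,y) = (x⁸ + y(x² − y³)²)/(x¹⁰ + (x² − y³)²)` (with `f(0,0) = 0`) equals `1/x²` on
the curve `x² = y³` away from the origin, hence is unbounded near the origin on that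
curve and not continuous at the origin; nevertheless it is regular on every smooth
algebraic arc. -/
theorem example_regular_on_arcs_not_locally_bounded
    (f : ℝ × ℝ → ℝ)
    (hf : ∀ x y : ℝ, (x, y) ≠ (0, 0) →
      f (x, y) = (x ^ 8 + y * (x ^ 2 - y ^ 3) ^ 2) / (x ^ 10 + (x ^ 2 - y ^ 3) ^ 2))
    (hf0 : f (0, 0) = 0) :
    (∀ x y : ℝ, (x, y) ≠ (0, 0) → x ^ 2 = y ^ 3 → f (x, y) = 1 / x ^ 2) ∧
    (∀ V ∈ nhds ((0, 0) : ℝ × ℝ),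
      ¬ ∃ M : ℝ, ∀ z ∈ V, z.1 ^ 2 = z.2 ^ 3 → |f z| ≤ M) ∧
    ¬ ContinuousAt f (0, 0) ∧
    (∀ P : MvPolynomial (Fin 2) ℝ, Irreducible P →
      ∀ A : Set (ℝ × ℝ), IsSmoothAlgebraicArc P A →
        ∀ a ∈ A, ∃ p q : MvPolynomial (Fin 2) ℝ, eval ![a.1, a.2] q ≠ 0 ∧
          ∀ z ∈ A, eval ![z.1, z.2] q ≠ 0 →
            f z = eval ![z.1, z.2] p / eval ![z.1, z.2] q) := by
  have part1 : ∀ x y : ℝ, (x, y) ≠ (0, 0) → x ^ 2 = y ^ 3 → f (x, y) = 1 / x ^ 2 := by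
    intro x y hne hxy
    have hx : x ≠ 0 := by
      rintro rfl
      have hy3 : y ^ 3 = 0 := by rw [← hxy]; ring
      have hy : y = 0 := (pow_eq_zero_iff (by norm_num : (3:ℕ) ≠ 0)).1 hy3
      exact hne (by rw [hy])
    have h2 : x ^ 2 - y ^ 3 = 0 := by rw [hxy]; ring
    rw [hf x y hne, h2]
    field_simp
    ring
  have part2 : ∀ V ∈ nhds ((0, 0) : ℝ × ℝ),
      ¬ ∃ M : ℝ, ∀ z ∈ V, z.1 ^ 2 = z.2 ^ 3 → |f z| ≤ M := by
    intro V hV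
    rintro ⟨M, hM⟩
    obtain ⟨ε, hε, hball⟩ := Metric.mem_nhds_iff.1 hV
    set δ := min (ε / 2) (1 / (|M| + 1)) with hδdef
    have hM1 : (0:ℝ) < |M| + 1 := by positivity
    have hδ0 : 0 < δ := lt_min (by linarith) (by positivity)
    have hδ1 : δ ≤ 1 / (|M| + 1) := min_le_right _ _
    have hδle1 : δ ≤ 1 := by
      refine hδ1.trans ?_
      rw [div_le_one hM1]
      linarith [abs_nonneg M]
    have hzV : ((δ ^ 3, δ ^ 2) : ℝ × ℝ) ∈ V := by
      apply hball
      rw [Metric.mem_ball, Prod.dist_eq]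
      have d1 : dist (δ ^ 3) (0:ℝ) = δ ^ 3 := by
        rw [Real.dist_eq, sub_zero, abs_of_pos (by positivity)]
      have d2 : dist (δ ^ 2) (0:ℝ) = δ ^ 2 := by
        rw [Real.dist_eq, sub_zero, abs_of_pos (by positivity)]
      have h3 : δ ^ 3 ≤ δ := by
        calc δ ^ 3 ≤ δ ^ 1 := pow_le_pow_of_le_one hδ0.le hδle1 (by norm_num)
        _ = δ := pow_one δ
      have h2 : δ ^ 2 ≤ δ := by
        calc δ ^ 2 ≤ δ ^ 1 := pow_le_pow_of_le_one hδ0.le hδle1 (by norm_num)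
        _ = δ := pow_one δ
      have hδε : δ < ε := lt_of_le_of_lt (min_le_left _ _) (by linarith)
      simp only [d1, d2]
      exact max_lt (lt_of_le_of_lt h3 hδε) (lt_of_le_of_lt h2 hδε)
    have hzne : ((δ ^ 3, δ ^ 2) : ℝ × ℝ) ≠ (0, 0) := by
      intro h
      have : δ ^ 3 = 0 := by rw [Prod.ext_iff] at h; exact h.1
      have : δ = 0 := (pow_eq_zero_iff (by norm_num : (3:ℕ) ≠ 0)).1 this
      linarith
    have hcusp : (δ ^ 3) ^ 2 = (δ ^ 2) ^ 3 := by ring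
    have hfz : f (δ ^ 3, δ ^ 2) = 1 / (δ ^ 3) ^ 2 := part1 _ _ hzne hcusp
    have hle := hM _ hzV hcusp
    rw [hfz] at hle
    have habs : |1 / (δ ^ 3) ^ 2| = 1 / δ ^ 6 := by
      rw [abs_of_pos (by positivity)]
      ring
    rw [habs] at hle
    have h6 : δ ^ 6 ≤ δ := by
      calc δ ^ 6 ≤ δ ^ 1 := pow_le_pow_of_le_one hδ0.le hδle1 (by norm_num)
      _ = δ := pow_one δ
    have hinv1 : 1 / δ ≤ 1 / δ ^ 6 := by
      apply one_div_le_one_div_of_le (by positivity) h6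
    have hinv2 : |M| + 1 ≤ 1 / δ := by
      have := one_div_le_one_div_of_le hδ0 hδ1
      rwa [one_div_one_div] at this
    have := le_abs_self M
    linarith
  refine ⟨part1, part2, ?_, ?_⟩
  · -- not continuous
    intro hc
    have hmem : f ⁻¹' Metric.ball (0:ℝ) 1 ∈ nhds ((0, 0) : ℝ × ℝ) := by
      apply hc.preimage_mem_nhds
      rw [hf0]
      exact Metric.ball_mem_nhds 0 one_pos
    refine part2 _ hmem ⟨1, ?_⟩
    intro z hz _
    have : |f z| < 1 := by
      simpa [Real.dist_eq] using hz
    linarith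
  · -- regular on arcs
    intro P _ A hA a ha
    obtain ⟨harc, -, -⟩ := hA
    by_cases h00 : a = ((0, 0) : ℝ × ℝ)
    · subst h00
      obtain ⟨hP0, hsm⟩ := harc _ ha
      obtain ⟨p, q, hq0, hp0, hdvd⟩ := ArcEx.regular_at_origin P hP0 hsm
      refine ⟨p, q, hq0, ?_⟩
      intro z hz hqz
      obtain ⟨hPz, -⟩ := harc z hz
      obtain ⟨g, hg⟩ := hdvd
      have heval := congrArg (eval ![z.1, z.2]) hg
      rw [map_sub, _root_.map_mul, _root_.map_mul, _root_.map_mul, hPz, zero_mul] at heval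
      have hNN : eval ![z.1, z.2] (ArcEx.NN (X 0) (X 1))
          = z.1 ^ 8 + z.2 * (z.1 ^ 2 - z.2 ^ 3) ^ 2 := by
        simp [ArcEx.NN]
      have hDD : eval ![z.1, z.2] (ArcEx.DD (X 0) (X 1))
          = z.1 ^ 10 + (z.1 ^ 2 - z.2 ^ 3) ^ 2 := by
        simp [ArcEx.DD]
      rw [hNN, hDD] at heval
      by_cases hz0 : z = ((0, 0) : ℝ × ℝ)
      · subst hz0
        rw [hf0, show eval ![((0,0) : ℝ × ℝ).1, ((0,0) : ℝ × ℝ).2] p = 0 from hp0, zero_div]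
      · have hzz : (z.1, z.2) ≠ ((0, 0) : ℝ × ℝ) := by rwa [Prod.mk.eta]
        have hD := ArcEx.Dne z hz0
        have hfz : f z = (z.1 ^ 8 + z.2 * (z.1 ^ 2 - z.2 ^ 3) ^ 2) /
            (z.1 ^ 10 + (z.1 ^ 2 - z.2 ^ 3) ^ 2) := by
          have := hf z.1 z.2 hzz
          rwa [Prod.mk.eta] at this
        rw [hfz, div_eq_div_iff hD hqz]
        linear_combination heval
    · refine ⟨ArcEx.NN (X 0) (X 1), ArcEx.DD (X 0) (X 1), ?_, ?_⟩
      · have hDD : eval ![a.1, a.2] (ArcEx.DD (X 0) (X 1))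
            = a.1 ^ 10 + (a.1 ^ 2 - a.2 ^ 3) ^ 2 := by
          simp [ArcEx.DD]
        rw [hDD]
        exact ArcEx.Dne a h00
      · intro z hz hqz
        have hDD : eval ![z.1, z.2] (ArcEx.DD (X 0) (X 1))
            = z.1 ^ 10 + (z.1 ^ 2 - z.2 ^ 3) ^ 2 := by
          simp [ArcEx.DD]
        have hNN : eval ![z.1, z.2] (ArcEx.NN (X 0) (X 1))
            = z.1 ^ 8 + z.2 * (z.1 ^ 2 - z.2 ^ 3) ^ 2 := by
          simp [ArcEx.NN]
        have hz0 : z ≠ ((0, 0) : ℝ × ℝ) := by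
          rintro rfl
          apply hqz
          simp [ArcEx.DD]
        have hzz : (z.1, z.2) ≠ ((0, 0) : ℝ × ℝ) := by rwa [Prod.mk.eta]
        have hfz : f z = (z.1 ^ 8 + z.2 * (z.1 ^ 2 - z.2 ^ 3) ^ 2) /
            (z.1 ^ 10 + (z.1 ^ 2 - z.2 ^ 3) ^ 2) := by
          have := hf z.1 z.2 hzz
          rwa [Prod.mk.eta] at this
        rw [hfz, hNN, hDD]
end
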